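/- Let φ₀, φ₁ be real numbers with δ = φ₁ − φ₀ > 0, let g(A) = Y(2A, δ−A, φ₀), and for A > 0 set θ = (δ−A)²/(4A). If 0 < A ≤ δ then 2√A · g(A) = p(θ), and if A ≥ δ then 2√A · g(A) = q(θ). -/

import Mathlib

open Real

/-- `Y a b c = ∫₀¹ sin(a τ²/2 + b τ + c) dτ` -/
noncomputable def Y (a b c : ℝ) : ℝ := ∫ τ in (0:ℝ)..1, Real.sin (a * τ ^ 2 / 2 + b * τ + c)

/-- `p φ₀ δ θ = ∫_θ^{θ+δ} sin(u + φ₀ - θ)/√u du` -/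
noncomputable def p (φ₀ δ θ : ℝ) : ℝ := ∫ u in θ..(θ + δ), Real.sin (u + φ₀ - θ) / Real.sqrt u

/-- `q φ₀ δ θ = p φ₀ δ θ + 2 ∫₀^θ sin(u + φ₀ - θ)/√u du` -/
noncomputable def q (φ₀ δ θ : ℝ) : ℝ :=
  p φ₀ δ θ + 2 * ∫ u in (0:ℝ)..θ, Real.sin (u + φ₀ - θ) / Real.sqrt u

/-!
Completing the square, the shift `t = τ + c` with `c = (δ - A) / (2A)` turns the phase of `Y` into
`A t² + φ₀ - θ`, and `θ = A c²`, `θ + δ = A (c + 1)²`. The substitution `u = A t²`, under which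
`2 √A dt = du / √u`, maps `[c, c + 1]` onto `[θ, θ + δ]` when `c ≥ 0`, i.e. `A ≤ δ`. When `c ≤ 0`
the interval straddles `0`; the integrand is even in `t`, so the piece `[c, 0]` contributes
`∫₀^θ` a second time and the total is `∫₀^{θ+δ} + ∫₀^θ = q`.
-/

open MeasureTheory Set intervalIntegral Interval

theorem intervalIntegrable_div_sqrt {f : ℝ → ℝ} (hf : Continuous f) {a b : ℝ} (ha : 0 ≤ a)
    (hb : 0 ≤ b) : IntervalIntegrable (fun u => f u / √u) volume a b := by
  have hrpow : IntervalIntegrable (fun u : ℝ => u ^ (-(1 / 2 : ℝ))) volume a b :=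
    intervalIntegrable_rpow' (by norm_num)
  refine (hrpow.continuousOn_mul hf.continuousOn).congr fun u hu => ?_
  have hu : 0 ≤ u := (le_min ha hb).trans (uIoc_subset_uIcc hu).1
  simp [div_eq_mul_inv, rpow_neg hu, sqrt_eq_rpow]

theorem hasDerivAt_sqrt_div {A u : ℝ} (hA : 0 < A) (hu : 0 < u) :
    HasDerivAt (fun u => √(u / A)) ((√u)⁻¹ / (2 * √A)) u := by
  refine (((hasDerivAt_id u).div_const A).sqrt (div_pos hu hA).ne').congr_deriv ?_
  have hu' := sqrt_pos.2 hu
  have hA' := sqrt_pos.2 hA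
  rw [id_eq, sqrt_div hu.le]
  field_simp
  rw [sq_sqrt hA.le]

theorem integral_div_sqrt_eq_integral_comp_sq {f : ℝ → ℝ} (hf : Continuous f) {A a b : ℝ}
    (hA : 0 < A) (ha : 0 ≤ a) (hb : 0 ≤ b) :
    ∫ u in A * a ^ 2..A * b ^ 2, f u / √u = 2 * √A * ∫ t in a..b, f (A * t ^ 2) := by
  have hφ : ∀ t, 0 ≤ t → √(A * t ^ 2 / A) = t := fun t ht => by
    rw [mul_div_cancel_left₀ _ hA.ne', sqrt_sq ht]
  have hmin : 0 ≤ min (A * a ^ 2) (A * b ^ 2) := le_min (by positivity) (by positivity)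
  have hintegrand : ∀ u ∈ [[A * a ^ 2, A * b ^ 2]],
      f (A * √(u / A) ^ 2) * ((√u)⁻¹ / (2 * √A)) = f u / √u / (2 * √A) := fun u hu => by
    rw [sq_sqrt (div_nonneg (hmin.trans hu.1) hA.le), mul_div_cancel₀ _ hA.ne']
    ring
  have hderiv : ∀ u ∈ Ioo (min (A * a ^ 2) (A * b ^ 2)) (max (A * a ^ 2) (A * b ^ 2)),
      HasDerivWithinAt (fun u => √(u / A)) ((√u)⁻¹ / (2 * √A)) (Ioi u) u := fun u hu =>
    (hasDerivAt_sqrt_div hA (hmin.trans_lt hu.1)).hasDerivWithinAt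
  have hint : IntegrableOn (fun u => f u / √u / (2 * √A)) [[A * a ^ 2, A * b ^ 2]] :=
    (intervalIntegrable_iff').1 ((intervalIntegrable_div_sqrt hf (by positivity)
      (by positivity)).div_const _)
  -- Substituting `t = √(u / A)` rather than `u = A t²` keeps the outer function `f (A t²)`
  -- continuous; the singularity of `1 / √u` at `0` then only enters through `hint`.
  have hsub := integral_comp_mul_deriv''' (g := fun t => f (A * t ^ 2)) (by fun_prop) hderiv
    (by fun_prop)
    ((hf.comp (by fun_prop)).continuousOn.integrableOn_compact
      (isCompact_uIcc.image (by fun_prop)))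
    (hint.congr_fun (fun u hu => (hintegrand u hu).symm) measurableSet_uIcc)
  simp only [hφ a ha, hφ b hb] at hsub
  rw [← hsub, ← intervalIntegral.integral_const_mul]
  refine integral_congr fun u hu => ?_
  simp only [Function.comp_apply, hintegrand u hu]
  have hA' := sqrt_pos.2 hA
  field_simp

theorem Y_eq_integral_sin_sq {A : ℝ} (hA : A ≠ 0) (b c : ℝ) :
    Y (2 * A) b c =
      ∫ t in b / (2 * A)..b / (2 * A) + 1, sin (A * t ^ 2 + c - b ^ 2 / (4 * A)) := by
  have hshift := integral_comp_add_right (a := 0) (b := 1)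
    (fun t => sin (A * t ^ 2 + c - b ^ 2 / (4 * A))) (b / (2 * A))
  rw [zero_add, add_comm 1] at hshift
  rw [Y, ← hshift]
  refine integral_congr fun t _ => ?_
  congr 1
  field_simp
  ring

theorem integral_of_even_eq_add {F : ℝ → ℝ} (hF : Continuous F) (heven : ∀ t, F (-t) = F t)
    (a b : ℝ) :
    ∫ t in a..b, F t = (∫ t in 0..b, F t) + ∫ t in 0..-a, F t := by
  have hreflect : ∫ t in 0..-a, F t = ∫ t in a..0, F t := calc
    _ = ∫ t in 0..-a, F (-t) := by simp only [heven]
    _ = ∫ t in a..0, F t := by rw [integral_comp_neg, neg_neg, neg_zero]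
  rw [hreflect, add_comm]
  exact (integral_add_adjacent_intervals (hF.intervalIntegrable _ _)
    (hF.intervalIntegrable _ _)).symm

theorem stmt1_general (φ₀ δ : ℝ) (hδ : 0 < δ)
    (A : ℝ) (hA : 0 < A) (θ : ℝ) (hθ : θ = (δ - A) ^ 2 / (4 * A)) :
    (A ≤ δ → 2 * Real.sqrt A * Y (2 * A) (δ - A) φ₀ = p φ₀ δ θ) ∧
    (δ ≤ A → 2 * Real.sqrt A * Y (2 * A) (δ - A) φ₀ = q φ₀ δ θ) := by
  set c := (δ - A) / (2 * A) with hc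
  have hθc : θ = A * c ^ 2 := by rw [hθ, hc]; field_simp; ring
  have hθδ : θ + δ = A * (c + 1) ^ 2 := by rw [hθ, hc]; field_simp; ring
  have hY : Y (2 * A) (δ - A) φ₀ = ∫ t in c..c + 1, sin (A * t ^ 2 + φ₀ - θ) := by
    rw [hθ]; exact Y_eq_integral_sin_sq hA.ne' _ _
  have hf : Continuous fun u => sin (u + φ₀ - θ) := by fun_prop
  constructor
  · intro hAδ
    have hc₀ : 0 ≤ c := div_nonneg (sub_nonneg.2 hAδ) (by positivity)
    have hsub := integral_div_sqrt_eq_integral_comp_sq hf hA hc₀ (b := c + 1) (by linarith)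
    rw [← hθc, ← hθδ] at hsub
    rw [hY, p, hsub]
  · intro hδA
    have hc₀ : 0 ≤ -c := by rw [hc, ← neg_div]; exact div_nonneg (by linarith) (by positivity)
    have hc₁ : 0 ≤ c + 1 := by
      rw [hc, div_add_one (by positivity)]; exact div_nonneg (by linarith) (by positivity)
    have hsub₁ := integral_div_sqrt_eq_integral_comp_sq hf hA le_rfl hc₁
    have hsub₂ := integral_div_sqrt_eq_integral_comp_sq hf hA le_rfl hc₀
    rw [← hθδ, zero_pow two_ne_zero, mul_zero] at hsub₁
    rw [neg_sq, ← hθc, zero_pow two_ne_zero, mul_zero] at hsub₂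
    have hp : p φ₀ δ θ = (∫ u in 0..θ + δ, sin (u + φ₀ - θ) / √u)
        - ∫ u in 0..θ, sin (u + φ₀ - θ) / √u :=
      (integral_interval_sub_left
        (intervalIntegrable_div_sqrt hf le_rfl (by rw [hθδ]; positivity))
        (intervalIntegrable_div_sqrt hf le_rfl (by rw [hθc]; positivity))).symm
    rw [q, hp, hY, integral_of_even_eq_add (by fun_prop) (fun t => by rw [neg_sq]), mul_add,
      ← hsub₁, ← hsub₂]
    ring

theorem stmt1 (φ₀ φ₁ δ : ℝ) (hδdef : δ = φ₁ - φ₀) (hδ : 0 < δ)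
    (A : ℝ) (hA : 0 < A) (θ : ℝ) (hθ : θ = (δ - A) ^ 2 / (4 * A)) :
    (A ≤ δ → 2 * Real.sqrt A * Y (2 * A) (δ - A) φ₀ = p φ₀ δ θ) ∧
    (δ ≤ A → 2 * Real.sqrt A * Y (2 * A) (δ - A) φ₀ = q φ₀ δ θ) :=
  stmt1_general φ₀ δ hδ A hA θ hθ
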